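/- arXiv:1404.5859 — 2 statements merged into one kernel-verified Lean document; each statement's English description precedes it below -/
import Mathlib

section
/- Under the assumptions of the greedy demand theorem, the greedy demand set A_k is the smallest demand set: it is contained in every other demand set of consumer k at prices p. -/
/-!
Take a maximizer `B` and a best feasible bundle `C ⊆ B`, so that `v(B) ≤ ∑_{l ∈ C} (w l - p l)`
since prices are positive. If `A ⊄ B`, then `A ⊄ C`, and swapping the goods of `C \ A` for those
of `A \ C` is strictly profitable: there are at least as many of the latter (`A` is either all
profitable goods or has exactly `q` of them), each beats every profitable good outside `A`, and
goods of nonpositive net utility only lower the sum. Hence `v(B) < v(A)`.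
-/

open Finset

variable {L : Type*} [Fintype L] [DecidableEq L]

/-- Hypotheses of the greedy demand construction: prices are strictly positive,
weights nonnegative, per-good net utilities `w l - p l` pairwise distinct, and
`A` consists of the at most `q` goods with the largest strictly positive
per-good net utilities. -/
structure GreedySetting (w p : L → ℝ) (q : ℕ) (A : Finset L) : Prop where
  hp : ∀ l, 0 < p l
  hw : ∀ l, 0 ≤ w l
  distinct : ∀ l l', l ≠ l' → w l - p l ≠ w l' - p l'
  pos : ∀ l ∈ A, 0 < w l - p l
  card : A.card = min q (Finset.univ.filter (fun l => 0 < w l - p l)).card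
  best : ∀ l ∈ A, ∀ l' ∉ A, 0 < w l' - p l' → w l' - p l' < w l - p l

theorem sum_lt_sum_of_card_le_of_forall_lt {ι M : Type*} [AddCommMonoid M] [LinearOrder M]
    [IsOrderedCancelAddMonoid M] {s t : Finset ι} {f : ι → M} (ht : t.Nonempty)
    (hcard : #s ≤ #t) (hpos : ∀ y ∈ t, 0 < f y) (hlt : ∀ x ∈ s, ∀ y ∈ t, f x < f y) :
    ∑ x ∈ s, f x < ∑ y ∈ t, f y := by
  obtain ⟨m, hm, hmin⟩ := t.exists_min_image f ht
  rcases s.eq_empty_or_nonempty with rfl | hs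
  · simpa using sum_pos hpos ht
  calc ∑ x ∈ s, f x < ∑ _x ∈ s, f m := sum_lt_sum_of_nonempty hs fun x hx => hlt x hx m hm
    _ = #s • f m := sum_const _
    _ ≤ #t • f m := nsmul_le_nsmul_left (hpos m hm).le hcard
    _ ≤ ∑ y ∈ t, f y := card_nsmul_le_sum _ _ _ hmin

namespace GreedySetting

variable {w p : L → ℝ} {q : ℕ} {A : Finset L}

omit [DecidableEq L] in
lemma card_le (hG : GreedySetting w p q A) : #A ≤ q :=
  hG.card ▸ min_le_left _ _

omit [DecidableEq L] in
lemma card_eq_of_pos_notMem (hG : GreedySetting w p q A) {x : L} (hx : 0 < w x - p x)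
    (hxA : x ∉ A) : #A = q := by
  have hsub : A ⊆ univ.filter (fun l => 0 < w l - p l) := fun l hl =>
    mem_filter.2 ⟨mem_univ l, hG.pos l hl⟩
  have hlt := card_lt_card <| (ssubset_iff_of_subset hsub).2 ⟨x, mem_filter.2 ⟨mem_univ x, hx⟩, hxA⟩
  have := hG.card
  omega

lemma card_sdiff_le (hG : GreedySetting w p q A) {D : Finset L} (hD : #D ≤ q)
    (hDpos : ∀ x ∈ D, 0 < w x - p x) : #(D \ A) ≤ #(A \ D) := by
  rcases (D \ A).eq_empty_or_nonempty with h | ⟨x, hx⟩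
  · simp [h]
  rw [mem_sdiff] at hx
  have hA := hG.card_eq_of_pos_notMem (hDpos x hx.1) hx.2
  have hDA := card_sdiff_add_card_inter D A
  have hAD := card_sdiff_add_card_inter A D
  rw [inter_comm] at hAD
  omega

lemma sum_lt_of_forall_pos (hG : GreedySetting w p q A) {D : Finset L} (hD : #D ≤ q)
    (hDpos : ∀ x ∈ D, 0 < w x - p x) (hAD : ¬A ⊆ D) :
    ∑ l ∈ D, (w l - p l) < ∑ l ∈ A, (w l - p l) := by
  rw [← sum_inter_add_sum_sdiff D A, ← sum_inter_add_sum_sdiff A D, inter_comm A D]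
  refine add_lt_add_right (sum_lt_sum_of_card_le_of_forall_lt ?_ (hG.card_sdiff_le hD hDpos)
    (fun y hy => hG.pos y (mem_sdiff.1 hy).1) fun x hx y hy => ?_) _
  · exact sdiff_nonempty.2 hAD
  · rw [mem_sdiff] at hx hy
    exact hG.best y hy.1 x hx.2 (hDpos x hx.1)

lemma sum_lt_of_not_subset (hG : GreedySetting w p q A) {D : Finset L} (hD : #D ≤ q)
    (hAD : ¬A ⊆ D) : ∑ l ∈ D, (w l - p l) < ∑ l ∈ A, (w l - p l) := by
  set D' := D.filter (fun l => 0 < w l - p l)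
  calc ∑ l ∈ D, (w l - p l) ≤ ∑ l ∈ D', (w l - p l) := by
        rw [← sum_filter_add_sum_filter_not D (fun l => 0 < w l - p l)]
        exact add_le_of_nonpos_right <| sum_nonpos fun l hl => not_lt.1 (mem_filter.1 hl).2
    _ < ∑ l ∈ A, (w l - p l) :=
        hG.sum_lt_of_forall_pos ((card_filter_le _ _).trans hD) (fun l hl => (mem_filter.1 hl).2)
          fun h => hAD (h.trans (filter_subset _ _))

end GreedySetting

/-- The greedy demand set `A` is the smallest demand set: it is contained in
every net-utility maximizer `B` at prices `p`. -/
theorem greedy_demand_smallest (w p : L → ℝ) (q : ℕ) (A : Finset L)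
    (hG : GreedySetting w p q A) (U : Finset L → ℝ)
    (hU : ∀ A' : Finset L,
      IsGreatest {x | ∃ B ⊆ A', B.card ≤ q ∧ x = ∑ l ∈ B, w l} (U A')) :
    ∀ B : Finset L,
      (∀ D : Finset L, U D - ∑ l ∈ D, p l ≤ U B - ∑ l ∈ B, p l) → A ⊆ B := by
  intro B hB
  by_contra hAB
  obtain ⟨C, hCB, hCq, hUB⟩ := (hU B).1
  have hUA : ∑ l ∈ A, w l ≤ U A := (hU A).2 ⟨A, subset_rfl, hG.card_le, rfl⟩
  have hpC : ∑ l ∈ C, p l ≤ ∑ l ∈ B, p l :=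
    sum_le_sum_of_subset_of_nonneg hCB fun l _ _ => (hG.hp l).le
  have hlt := hG.sum_lt_of_not_subset hCq fun h => hAB (h.trans hCB)
  rw [sum_sub_distrib, sum_sub_distrib] at hlt
  linarith [hB A]
end

section
/- For the q-satiation U of a nonnegative additively separable valuation with distinct per-good net utilities at prices p > 0, the greedy demand set A satisfies the single improvement property negatively: no set B with |A \ B| ≤ 1 or |B \ A| ≤ 1 achieves strictly greater net utility than A. -/
open Finset

variable {L : Type*} [Fintype L] [DecidableEq L]

/-!
The greedy set maximises `∑ (w l - p l)` over *all* sets of at most `q` goods: dropping the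
goods of nonpositive net utility only helps, and what remains has at most `#A` goods, each
worth less than every good of `A` it replaces. Since `U B` is attained on some `C ⊆ B` with
`#C ≤ q` and prices are nonnegative, `v(B, p) ≤ ∑_{l ∈ C} (w l - p l) ≤ v(A, p)` for every `B`,
so no improvement of `A` exists at all, single or not.
-/

section Exchange

variable {ι M : Type*} [AddCommMonoid M] [LinearOrder M] [IsOrderedCancelAddMonoid M]
  {f : ι → M} {s t : Finset ι}

theorem sum_le_sum_of_card_le_of_forall_le (hcard : #s ≤ #t)
    (hle : ∀ x ∈ s, ∀ y ∈ t, f x ≤ f y) (hnonneg : ∀ y ∈ t, 0 ≤ f y) :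
    ∑ x ∈ s, f x ≤ ∑ y ∈ t, f y := by
  obtain rfl | ht := t.eq_empty_or_nonempty
  · simp [card_eq_zero.mp (Nat.le_zero.mp hcard)]
  obtain ⟨m, hm, hmin⟩ := exists_min_image t f ht
  calc ∑ x ∈ s, f x ≤ #s • f m := sum_le_card_nsmul s f _ fun x hx => hle x hx m hm
    _ ≤ #t • f m := nsmul_le_nsmul_left (hnonneg m hm) hcard
    _ ≤ ∑ y ∈ t, f y := card_nsmul_le_sum t f _ hmin

theorem sum_le_sum_of_card_le_of_forall_sdiff_le [DecidableEq ι] (hcard : #s ≤ #t)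
    (hle : ∀ x ∈ s \ t, ∀ y ∈ t \ s, f x ≤ f y) (hnonneg : ∀ y ∈ t \ s, 0 ≤ f y) :
    ∑ x ∈ s, f x ≤ ∑ y ∈ t, f y :=
  sum_sdiff_le_sum_sdiff.mp <|
    sum_le_sum_of_card_le_of_forall_le (card_sdiff_le_card_sdiff_iff.mpr hcard) hle hnonneg

theorem sum_le_sum_filter_pos (s : Finset ι) (f : ι → M) :
    ∑ x ∈ s, f x ≤ ∑ x ∈ s with 0 < f x, f x := by
  rw [sum_filter]
  refine sum_le_sum fun x _ => ?_
  split_ifs with hx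
  exacts [le_rfl, not_lt.mp hx]

end Exchange

namespace GreedySetting

variable {w p : L → ℝ} {q : ℕ} {A : Finset L}

theorem sum_sub_le_of_card_le (hG : GreedySetting w p q A) {C : Finset L} (hC : #C ≤ q) :
    ∑ l ∈ C, (w l - p l) ≤ ∑ l ∈ A, (w l - p l) := by
  have hcard : #{l ∈ C | 0 < w l - p l} ≤ #A := by
    rw [hG.card]
    exact le_min ((card_filter_le _ _).trans hC)
      (card_le_card (filter_subset_filter _ (subset_univ C)))
  refine (sum_le_sum_filter_pos C _).trans
    (sum_le_sum_of_card_le_of_forall_sdiff_le hcard (fun x hx y hy => ?_)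
      fun y hy => (hG.pos y (mem_sdiff.mp hy).1).le)
  rw [mem_sdiff, mem_filter] at hx
  exact (hG.best y (mem_sdiff.mp hy).1 x hx.2 hx.1.2).le

end GreedySetting

/-- No single improvement: no set `B` with `|A \ B| ≤ 1` or `|B \ A| ≤ 1`
achieves strictly greater net utility than the greedy set `A`. -/
theorem greedy_no_single_improvement (w p : L → ℝ) (q : ℕ) (A : Finset L)
    (hG : GreedySetting w p q A) (U : Finset L → ℝ)
    (hU : ∀ A' : Finset L,
      IsGreatest {x | ∃ B ⊆ A', B.card ≤ q ∧ x = ∑ l ∈ B, w l} (U A')) :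
    ∀ B : Finset L, ((A \ B).card ≤ 1 ∨ (B \ A).card ≤ 1) →
      U B - ∑ l ∈ B, p l ≤ U A - ∑ l ∈ A, p l := by
  intro B _
  obtain ⟨C, hCB, hCq, hUB⟩ := (hU B).1
  have hUA : ∑ l ∈ A, w l ≤ U A := (hU A).2 ⟨A, subset_rfl, hG.card ▸ min_le_left _ _, rfl⟩
  have hpC : ∑ l ∈ C, p l ≤ ∑ l ∈ B, p l :=
    sum_le_sum_of_subset_of_nonneg hCB fun l _ _ => (hG.hp l).le
  have hgreedy := hG.sum_sub_le_of_card_le hCq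
  rw [sum_sub_distrib, sum_sub_distrib] at hgreedy
  rw [hUB]
  linarith
end
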